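/- arXiv:2309.13964 — 2 statements merged into one kernel-verified Lean document; each statement's English description precedes it below -/
import Mathlib

section
/- Let k be a commutative ring, A a k-algebra, e an idempotent of A, and Λ := eAe. Then every idealized extension R of A by the A-A-bimodule X := Ae ⊗_Λ eA is equal (as an idealized extension) to the mirror-reflective algebra R(A,e,z) for some z ∈ Z(Λ); that is, the multiplication of R restricted to X ⊗_A X → X coincides with ω_z for some z ∈ Z(Λ). -/
/-!
Common setup: bimodules over a ring `A`, a universal-property description of the
`A`-`A`-bimodule `Ae ⊗_{eAe} eA` (with distinguished element `u = e ⊗ e`),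
a universal-property description of tensor products of bimodules over `A`,
and the center of the corner ring `eAe`.
-/

open MulOpposite

universe u

namespace Paper

/-- A bundled `A`-`A`-bimodule, encoded via commuting left `A`- and left `Aᵐᵒᵖ`-actions. -/
structure Bimod (A : Type u) [Ring A] : Type (u + 1) where
  carrier : Type u
  [addCommGroup : AddCommGroup carrier]
  [modLeft : Module A carrier]
  [modRight : Module Aᵐᵒᵖ carrier]
  [smulComm : SMulCommClass A Aᵐᵒᵖ carrier]

attribute [instance] Bimod.addCommGroup Bimod.modLeft Bimod.modRight Bimod.smulComm

/-- A homomorphism of `A`-`A`-bimodules. -/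
def IsBimodHom (A : Type u) [Ring A] {X Y : Type u} [AddCommGroup X] [AddCommGroup Y]
    [Module A X] [Module Aᵐᵒᵖ X] [Module A Y] [Module Aᵐᵒᵖ Y] (g : X → Y) : Prop :=
  (∀ x y : X, g (x + y) = g x + g y) ∧ (∀ (a : A) (x : X), g (a • x) = a • g x) ∧
    (∀ (a : Aᵐᵒᵖ) (x : X), g (a • x) = a • g x)

variable (A : Type u) [Ring A]

/-- `(X, u)` is a model for the `A`-`A`-bimodule `Ae ⊗_{eAe} eA`, where `u` plays the
role of `e ⊗ e`.  This is expressed by the universal property: bimodule maps out of `X`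
correspond exactly to elements `v` of the target with `v = e v e` and
`λ • v = v • λ` for all `λ ∈ eAe`. -/
structure IsAeTensor (e : A) (X : Type u) [AddCommGroup X]
    [Module A X] [Module Aᵐᵒᵖ X] [SMulCommClass A Aᵐᵒᵖ X] (u : X) : Prop where
  smul_e : e • u = u
  op_smul_e : op e • u = u
  balance : ∀ a : A, (e * a * e) • u = op (e * a * e) • u
  universal : ∀ (Y : Bimod.{u} A) (v : Y.carrier), e • v = v → op e • v = v →
    (∀ a : A, (e * a * e) • v = op (e * a * e) • v) →
      ∃! g : X → Y.carrier, IsBimodHom A g ∧ g u = v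

/-- The element `ae ⊗ eb` of (a model `(X, u)` of) `Ae ⊗_{eAe} eA`. -/
def tmk (e : A) {X : Type u} [AddCommGroup X] [Module A X] [Module Aᵐᵒᵖ X]
    (u : X) (a b : A) : X :=
  (a * e) • (op (e * b) • u)

/-- `t : X → Y → Z` is biadditive, `A`-balanced and bilinear over the outer
`A`-`A`-bimodule structures. -/
def IsBalancedBiadd {X Y Z : Type u} [AddCommGroup X] [AddCommGroup Y] [AddCommGroup Z]
    [Module A X] [Module Aᵐᵒᵖ X] [Module A Y] [Module Aᵐᵒᵖ Y] [Module A Z] [Module Aᵐᵒᵖ Z]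
    (t : X → Y → Z) : Prop :=
  (∀ x x' y, t (x + x') y = t x y + t x' y) ∧
  (∀ x y y', t x (y + y') = t x y + t x y') ∧
  (∀ (a : A) x y, t (op a • x) y = t x (a • y)) ∧
  (∀ (a : A) x y, t (a • x) y = a • t x y) ∧
  (∀ (a : A) x y, t x (op a • y) = op a • t x y)

/-- `t : X → Y → T` is a model for the tensor product `X ⊗_A Y` of `A`-`A`-bimodules. -/
structure IsTensorOverA {X Y T : Type u} [AddCommGroup X] [AddCommGroup Y] [AddCommGroup T]
    [Module A X] [Module Aᵐᵒᵖ X] [Module A Y] [Module Aᵐᵒᵖ Y] [Module A T] [Module Aᵐᵒᵖ T]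
    [SMulCommClass A Aᵐᵒᵖ T] (t : X → Y → T) : Prop where
  balanced : IsBalancedBiadd A t
  universal : ∀ (Z : Bimod.{u} A) (s : X → Y → Z.carrier), IsBalancedBiadd A s →
    ∃! g : T → Z.carrier, IsBimodHom A g ∧ ∀ x y, g (t x y) = s x y

/-- The center `Z(eAe)` of the corner ring `eAe`, as a subset of `A`. -/
def centerCorner (e : A) : Set A :=
  {z | z = e * z * e ∧ ∀ a : A, z * (e * a * e) = (e * a * e) * z}

end Paper

/-!
In `R`, the square `w` of `u = e ⊗ e` lies in `X` and, like `u`, is fixed by `e` on both sides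
and balanced over `eAe`. Since `X` is generated by `u` as a bimodule, every such element of `X`
is `u z` with `z ∈ eAe`; cancelling `u` through the multiplication map `Ae ⊗ eA → A` shows
that `z` commutes with `eAe`. Then `u a u = (e a e) u z` for all `a`, which is `ω_z` on pure
tensors.
-/

namespace Paper

open MulOpposite

variable {A : Type u} [Ring A] {e : A} {X : Type u} [AddCommGroup X] [Module A X]
  [Module Aᵐᵒᵖ X] {u : X}

theorem _root_.IsIdempotentElem.mul_corner (he : IsIdempotentElem e) (a : A) :
    e * (e * a * e) = e * a * e := by
  simp only [mul_assoc, he.mul_self_mul]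

theorem _root_.IsIdempotentElem.corner_mul (he : IsIdempotentElem e) (a : A) :
    e * a * e * e = e * a * e :=
  he.mul_mul_self _

section

variable [SMulCommClass A Aᵐᵒᵖ X]

def Bimod.ofSubmodule (S : Submodule A X) (hS : ∀ (b : Aᵐᵒᵖ) (x : X), x ∈ S → b • x ∈ S) :
    Bimod A :=
  letI : SMul Aᵐᵒᵖ S := ⟨fun b x => ⟨b • x, hS b x x.2⟩⟩
  { carrier := S
    modRight := Function.Injective.module Aᵐᵒᵖ S.subtype.toAddMonoidHom Subtype.val_injective
      fun _ _ => rfl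
    smulComm := ⟨fun a b x => Subtype.ext (smul_comm a b (x : X))⟩ }

namespace IsAeTensor

theorem isBimodHom_ext (hX : IsAeTensor A e X u) {Y : Bimod A} {f g : X → Y.carrier}
    (hf : IsBimodHom A f) (hg : IsBimodHom A g) (h : f u = g u) : f = g := by
  obtain ⟨_, _, huniq⟩ := hX.universal Y (f u)
    (by rw [← hf.2.1, hX.smul_e]) (by rw [← hf.2.2, hX.op_smul_e])
    (fun a => by rw [← hf.2.1, ← hf.2.2, hX.balance])
  exact (huniq f ⟨hf, rfl⟩).trans (huniq g ⟨hg, h.symm⟩).symm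

theorem mem_of_op_smul_mem (hX : IsAeTensor A e X u) (S : Submodule A X)
    (hS : ∀ (b : Aᵐᵒᵖ) (x : X), x ∈ S → b • x ∈ S) (hu : u ∈ S) (x : X) : x ∈ S := by
  obtain ⟨g, ⟨hg, hgu⟩, -⟩ := hX.universal (Bimod.ofSubmodule S hS) ⟨u, hu⟩
    (Subtype.ext hX.smul_e) (Subtype.ext hX.op_smul_e) (fun a => Subtype.ext (hX.balance a))
  have hid : (fun x => (g x).1) = id :=
    hX.isBimodHom_ext (Y := Bimod.mk X)
      ⟨fun x y => congrArg Subtype.val (hg.1 x y), fun a x => congrArg Subtype.val (hg.2.1 a x),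
        fun b x => congrArg Subtype.val (hg.2.2 b x)⟩
      ⟨fun _ _ => rfl, fun _ _ => rfl, fun _ _ => rfl⟩ (congrArg Subtype.val hgu)
  have hgx : (g x).1 = x := congrFun hid x
  exact hgx ▸ (g x).2

theorem exists_corner_eq (hX : IsAeTensor A e X u) (x : X) :
    ∃ z : A, e • op e • x = op (e * z * e) • u := by
  -- The corner `e X e` is not a sub-bimodule, so all compressions `e a x b e` are tracked.
  let S : Submodule A X :=
    { carrier := {x | ∀ a b : A, ∃ z, (e * a) • op (b * e) • x = op (e * z * e) • u}
      add_mem' := fun {x y} hx hy a b => by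
        obtain ⟨z, hz⟩ := hx a b
        obtain ⟨z', hz'⟩ := hy a b
        exact ⟨z + z', by rw [smul_add, smul_add, hz, hz', mul_add, add_mul, op_add, add_smul]⟩
      zero_mem' := fun _ _ => ⟨0, by simp⟩
      smul_mem' := fun c x hx a b => by
        obtain ⟨z, hz⟩ := hx (a * c) b
        exact ⟨z, by rw [← hz, ← smul_comm c, smul_smul, mul_assoc]⟩ }
  have hS : ∀ (c : Aᵐᵒᵖ) (x : X), x ∈ S → c • x ∈ S := fun c x hx a b => by
    obtain ⟨z, hz⟩ := hx a (unop c * b)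
    exact ⟨z, by rw [← hz, smul_smul, ← op_unop c, ← op_mul, op_unop, mul_assoc]⟩
  have hu : u ∈ S := fun a b => ⟨a * e * e * b, by
    calc (e * a) • op (b * e) • u = (e * a) • op (b * e) • e • op e • u := by
          rw [hX.op_smul_e, hX.smul_e]
      _ = (e * a * e) • op (e * b * e) • u := by
          rw [← smul_comm e (op (b * e)), smul_smul, smul_smul (op (b * e)), ← op_mul]
          simp only [mul_assoc]
      _ = op (e * b * e) • op (e * a * e) • u := by rw [smul_comm, hX.balance]
      _ = op (e * (a * e * e * b) * e) • u := by rw [smul_smul, ← op_mul]; simp only [mul_assoc]⟩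
  obtain ⟨z, hz⟩ := hX.mem_of_op_smul_mem S hS hu x 1 1
  exact ⟨z, by simpa using hz⟩

theorem mul_eq_mul_of_op_smul_eq (he : IsIdempotentElem e) (hX : IsAeTensor A e X u) {a b : A}
    (h : op a • u = op b • u) : e * a = e * b := by
  -- `μ` is the multiplication map `Ae ⊗_{eAe} eA → A`.
  obtain ⟨μ, ⟨hμ, hμu⟩, -⟩ := hX.universal (Bimod.mk A) e he he
    (fun a => by simp only [smul_eq_mul, op_smul_eq_mul, mul_assoc, he.eq, he.mul_self_mul])
  simpa only [hμ.2.2, hμu, op_smul_eq_mul] using congrArg μ h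

end IsAeTensor

end

structure IsIdealizedExtension {R F : Type*} [Ring R] [FunLike F A R] (ι : F) (j : X →+ R) :
    Prop where
  bijective : Function.Bijective fun p : A × X => ι p.1 + j p.2
  mul_left : ∀ (a : A) (x : X), ι a * j x = j (a • x)
  mul_right : ∀ (a : A) (x : X), j x * ι a = j (op a • x)
  mul_mem_range : ∀ x y : X, ∃ z : X, j x * j y = j z

namespace IsIdealizedExtension

variable {R F : Type*} [Ring R] [FunLike F A R] {ι : F} {j : X →+ R}

theorem tmk_eq (h : IsIdealizedExtension ι j) (b c : A) :
    j (tmk A e u b c) = ι (b * e) * j u * ι (e * c) := by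
  rw [tmk, ← h.mul_left, ← h.mul_right, mul_assoc]

theorem injective [RingHomClass F A R] (h : IsIdealizedExtension ι j) : Function.Injective j :=
  fun x y hxy => congrArg Prod.snd (h.bijective.1 (a₁ := (0, x)) (a₂ := (0, y)) (by simp [hxy]))

variable [SMulCommClass A Aᵐᵒᵖ X]

theorem commute_corner (h : IsIdealizedExtension ι j) (hX : IsAeTensor A e X u) (a : A) :
    Commute (ι (e * a * e)) (j u) := by
  rw [Commute, SemiconjBy, h.mul_left, h.mul_right, hX.balance]

variable [RingHomClass F A R]

theorem mul_map_mul_eq (h : IsIdealizedExtension ι j) (hX : IsAeTensor A e X u) {z : A}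
    (hz : j u * j u = j u * ι z) (a : A) :
    j u * ι a * j u = ι (e * a * e) * j u * ι z := by
  have hue : j u * ι e = j u := by rw [h.mul_right, hX.op_smul_e]
  have heu : ι e * j u = j u := by rw [h.mul_left, hX.smul_e]
  calc j u * ι a * j u = j u * ι e * ι a * (ι e * j u) := by rw [hue, heu]
    _ = j u * ι (e * a * e) * j u := by simp only [map_mul, mul_assoc]
    _ = ι (e * a * e) * j u * ι z := by
        rw [mul_assoc (ι _), ← hz, ← mul_assoc, (h.commute_corner hX a).eq]

theorem mem_centerCorner (h : IsIdealizedExtension ι j) (he : IsIdempotentElem e)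
    (hX : IsAeTensor A e X u) {z : A} (hze : z = e * z * e) (hz : j u * j u = j u * ι z) :
    z ∈ centerCorner A e := by
  refine ⟨hze, fun a => ?_⟩
  have hc := h.commute_corner hX a
  have hop : op (z * (e * a * e)) • u = op (e * a * e * z) • u := h.injective <| by
    calc j (op (z * (e * a * e)) • u) = j u * ι z * ι (e * a * e) := by
          rw [← h.mul_right, map_mul, ← mul_assoc]
      _ = ι (e * a * e) * (j u * j u) := by
          rw [← hz, mul_assoc, ← hc.eq, ← mul_assoc, ← hc.eq, mul_assoc]
      _ = j u * ι (e * a * e) * ι z := by rw [hz, ← mul_assoc, hc.eq]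
      _ = j (op (e * a * e * z) • u) := by rw [mul_assoc, ← map_mul, h.mul_right]
  have hez : e * z = z := by rw [hze, he.mul_corner]
  simpa only [← mul_assoc, hez, he.mul_corner] using hX.mul_eq_mul_of_op_smul_eq he hop

theorem exists_mem_centerCorner_mul_self_eq (h : IsIdealizedExtension ι j)
    (he : IsIdempotentElem e) (hX : IsAeTensor A e X u) :
    ∃ z ∈ centerCorner A e, j u * j u = j u * ι z := by
  obtain ⟨w, hw⟩ := h.mul_mem_range u u
  have hw_corner : e • op e • w = w := h.injective <| by
    rw [← h.mul_left, ← h.mul_right, ← hw, mul_assoc (j u), h.mul_right, hX.op_smul_e,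
      ← mul_assoc, h.mul_left, hX.smul_e]
  obtain ⟨z, hz⟩ := hX.exists_corner_eq w
  rw [hw_corner] at hz
  have hsq : j u * j u = j u * ι (e * z * e) := by rw [hw, hz, h.mul_right]
  exact ⟨e * z * e, h.mem_centerCorner he hX (by rw [he.mul_corner, he.corner_mul]) hsq, hsq⟩

end IsIdealizedExtension

/-- Every idealized extension `R` of `A` by the `A`-`A`-bimodule
`X = Ae ⊗_{eAe} eA` is the mirror-reflective algebra `R(A, e, z)` for some
`z ∈ Z(eAe)`: the multiplication of `R` restricted to `X` coincides with `ω_z`. -/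
theorem idealized_extension_is_mirror_reflective
    (k : Type u) [CommRing k] (A : Type u) [Ring A] [Algebra k A]
    (e : A) (he : IsIdempotentElem e)
    (X : Type u) [AddCommGroup X] [Module A X] [Module Aᵐᵒᵖ X] [SMulCommClass A Aᵐᵒᵖ X]
    (u : X) (hX : IsAeTensor A e X u)
    -- `R` is an idealized extension of `A` by `X`:
    (R : Type u) [Ring R] [Algebra k R]
    (ι : A →ₐ[k] R) (j : X →+ R)
    (hbij : Function.Bijective (fun p : A × X => ι p.1 + j p.2))
    (hleft : ∀ (a : A) (x : X), ι a * j x = j (a • x))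
    (hright : ∀ (a : A) (x : X), j x * ι a = j (op a • x))
    (hideal : ∀ x y : X, ∃ z : X, j x * j y = j z) :
    ∃ z ∈ centerCorner A e, ∀ b c b' c' : A,
      j (tmk A e u b c) * j (tmk A e u b' c') =
        j (tmk A e u (b * e * c * b') (z * c')) := by
  have hR : IsIdealizedExtension ι j := ⟨hbij, hleft, hright, hideal⟩
  obtain ⟨z, hz, hsq⟩ := hR.exists_mem_centerCorner_mul_self_eq he hX
  refine ⟨z, hz, fun b c b' c' => ?_⟩
  have hez : e * z = z := by rw [hz.1, he.mul_corner]
  have hze : z * e = z := by rw [hz.1, he.corner_mul]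
  calc j (tmk A e u b c) * j (tmk A e u b' c')
      = ι (b * e) * (j u * ι (e * c * (b' * e)) * j u) * ι (e * c') := by
        simp only [hR.tmk_eq, map_mul, mul_assoc]
    _ = ι (b * e) * (ι (e * (e * c * (b' * e)) * e) * j u * ι z) * ι (e * c') := by
        rw [hR.mul_map_mul_eq hX hsq]
    _ = ι (b * e * c * b' * e) * j u * ι (e * (z * c')) := by
        rw [show b * e * c * b' * e = b * e * (e * (e * c * (b' * e)) * e) by
            simp only [mul_assoc, he.eq, he.mul_self_mul],
          show e * (z * c') = z * (e * c') by rw [← mul_assoc, hez, ← mul_assoc, hze]]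
        simp only [map_mul, mul_assoc]
    _ = j (tmk A e u (b * e * c * b') (z * c')) := (hR.tmk_eq _ _).symm

end Paper
end

section
/- Let k be a commutative ring, A a k-algebra, e an idempotent of A, Λ := eAe, and Δ0 := Ae ⊗_Λ eA. For λ ∈ Z(Λ), the A-A-bimodule homomorphism ω_λ: Δ0 ⊗_A Δ0 → Δ0 is an isomorphism if and only if λ is an invertible element of Z(Λ). -/
/-!
Common setup: bimodules over a ring `A`, a universal-property description of the
`A`-`A`-bimodule `Ae ⊗_{eAe} eA` (with distinguished element `u = e ⊗ e`),
a universal-property description of tensor products of bimodules over `A`,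
and the center of the corner ring `eAe`.
-/

open MulOpposite

universe u

/-!
Bimodule maps out of `Δ₀ = Ae ⊗_Λ eA` are determined by the image of `e ⊗ e`, which may be any
element of `eYe` commuting with `Λ`. For `Y = A` this gives the multiplication `μ : Δ₀ → A`, and
`x ⊗ y ↦ μ(x) y` is an isomorphism `Δ₀ ⊗_A Δ₀ ≅ Δ₀` with inverse `e ⊗ e ↦ (e ⊗ e) ⊗ (e ⊗ e)`.
Through it `ω_λ` becomes the endomorphism `l_λ : e ⊗ e ↦ λ ⊗ e` of `Δ₀`. Since `eΔ₀e ≅ Λ`, the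
bimodule endomorphisms of `Δ₀` are exactly the `l_z` with `z ∈ Z(Λ)`, and `l_z ∘ l_w = l_{wz}`;
so `l_λ` is bijective iff `λ` is a unit of `Z(Λ)`.
-/

namespace Paper

open MulOpposite Function

variable {A : Type u} [Ring A]

section BimodHom

variable {X Y Z : Type u} [AddCommGroup X] [AddCommGroup Y] [AddCommGroup Z]
  [Module A X] [Module Aᵐᵒᵖ X] [Module A Y] [Module Aᵐᵒᵖ Y] [Module A Z] [Module Aᵐᵒᵖ Z]
  {f : X → Y}

theorem IsBimodHom.id : IsBimodHom A (id : X → X) :=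
  ⟨fun _ _ => rfl, fun _ _ => rfl, fun _ _ => rfl⟩

theorem IsBimodHom.comp {g : Y → Z} (hg : IsBimodHom A g) (hf : IsBimodHom A f) :
    IsBimodHom A (g ∘ f) :=
  ⟨fun x y => by simp only [comp_apply, hf.1, hg.1],
    fun a x => by simp only [comp_apply, hf.2.1, hg.2.1],
    fun a x => by simp only [comp_apply, hf.2.2, hg.2.2]⟩

theorem IsBimodHom.map_tmk (hf : IsBimodHom A f) (e : A) (v : X) (a b : A) :
    f (tmk A e v a b) = tmk A e (f v) a b := by
  rw [tmk, tmk, hf.2.1, hf.2.2]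

end BimodHom

section Tmk

variable {X : Type u} [AddCommGroup X] [Module A X] [Module Aᵐᵒᵖ X] (e : A) (v : X)

theorem smul_tmk (a b c : A) : a • tmk A e v b c = tmk A e v (a * b) c := by
  rw [tmk, tmk, smul_smul, mul_assoc]

theorem op_smul_tmk [SMulCommClass A Aᵐᵒᵖ X] (a b c : A) :
    op a • tmk A e v b c = tmk A e v b (c * a) := by
  rw [tmk, tmk, ← smul_comm (b * e) (op a), smul_smul, ← op_mul, mul_assoc]

theorem tmk_idem (he : IsIdempotentElem e) (a b : A) : tmk A e e a b = a * e * b := by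
  simp only [tmk, smul_eq_mul, op_smul_eq_mul, mul_assoc, he.mul_self_mul]

end Tmk

structure IsCornerCentral (e : A) {Y : Type u} [SMul A Y] [SMul Aᵐᵒᵖ Y] (v : Y) : Prop where
  smul_eq : e • v = v
  op_smul_eq : op e • v = v
  comm : ∀ a : A, (e * a * e) • v = op (e * a * e) • v

section CornerCentral

variable {e : A} {Y Z : Type u} [AddCommGroup Y] [Module A Y] [Module Aᵐᵒᵖ Y]
  [AddCommGroup Z] [Module A Z] [Module Aᵐᵒᵖ Z] {v : Y}

theorem IsCornerCentral.map {g : Y → Z} (hg : IsBimodHom A g) (hv : IsCornerCentral e v) :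
    IsCornerCentral e (g v) :=
  ⟨by rw [← hg.2.1, hv.smul_eq], by rw [← hg.2.2, hv.op_smul_eq],
    fun a => by rw [← hg.2.1, ← hg.2.2, hv.comm]⟩

theorem IsCornerCentral.of_map {g : Y → Z} (hg : IsBimodHom A g) (hinj : Injective g)
    (hv : IsCornerCentral e (g v)) : IsCornerCentral e v :=
  ⟨hinj (by rw [hg.2.1, hv.smul_eq]), hinj (by rw [hg.2.2, hv.op_smul_eq]),
    fun a => hinj (by rw [hg.2.1, hg.2.2, hv.comm])⟩

variable {z w : A}

theorem idem_mul_of_mem_centerCorner (he : IsIdempotentElem e) (hz : z ∈ centerCorner A e) :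
    e * z = z := by
  rw [hz.1, ← mul_assoc, ← mul_assoc, he.eq]

theorem mul_idem_of_mem_centerCorner (he : IsIdempotentElem e) (hz : z ∈ centerCorner A e) :
    z * e = z := by
  rw [hz.1, mul_assoc, he.eq]

theorem mul_comm_of_mem_centerCorner (hz : z ∈ centerCorner A e) (hw : w ∈ centerCorner A e) :
    z * w = w * z := by
  have h := hz.2 w
  rwa [← hw.1] at h

theorem isCornerCentral_iff_mem_centerCorner (he : IsIdempotentElem e) :
    IsCornerCentral e z ↔ z ∈ centerCorner A e := by
  constructor
  · rintro ⟨hl, hr, hc⟩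
    rw [smul_eq_mul] at hl
    rw [op_smul_eq_mul] at hr
    refine ⟨by rw [hl, hr], fun a => ?_⟩
    simpa only [smul_eq_mul, op_smul_eq_mul] using (hc a).symm
  · intro hz
    refine ⟨idem_mul_of_mem_centerCorner he hz, mul_idem_of_mem_centerCorner he hz, fun a => ?_⟩
    rw [smul_eq_mul, op_smul_eq_mul, hz.2 a]

theorem idem_mem_centerCorner (he : IsIdempotentElem e) : e ∈ centerCorner A e :=
  ⟨by rw [he.eq, he.eq], fun a => by simp only [mul_assoc, he.eq, he.mul_self_mul]⟩

theorem IsCornerCentral.smul [SMulCommClass A Aᵐᵒᵖ Y] (he : IsIdempotentElem e)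
    (hz : z ∈ centerCorner A e) (hv : IsCornerCentral e v) : IsCornerCentral e (z • v) :=
  ⟨by rw [smul_smul, idem_mul_of_mem_centerCorner he hz],
    by rw [← smul_comm, hv.op_smul_eq],
    fun a => by rw [smul_smul, ← hz.2 a, mul_smul, hv.comm, smul_comm]⟩

theorem map_tmk_of_map_eq_smul [SMulCommClass A Aᵐᵒᵖ Y] (he : IsIdempotentElem e)
    (hz : z ∈ centerCorner A e) {f : Y → Y} (hf : IsBimodHom A f) (hfv : f v = z • v) (a b : A) :
    f (tmk A e v a b) = tmk A e v (a * z) b := by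
  rw [hf.map_tmk, hfv, tmk, tmk, ← smul_comm z, smul_smul]
  simp only [mul_assoc, idem_mul_of_mem_centerCorner he hz, mul_idem_of_mem_centerCorner he hz]

end CornerCentral

namespace IsAeTensor

variable {e : A} {X : Type u} [AddCommGroup X] [Module A X] [Module Aᵐᵒᵖ X]
  [SMulCommClass A Aᵐᵒᵖ X] {u : X} {z : A}
  {Y : Type u} [AddCommGroup Y] [Module A Y] [Module Aᵐᵒᵖ Y] [SMulCommClass A Aᵐᵒᵖ Y]

theorem isCornerCentral (hX : IsAeTensor A e X u) : IsCornerCentral e u :=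
  ⟨hX.smul_e, hX.op_smul_e, hX.balance⟩

theorem existsUnique_hom (hX : IsAeTensor A e X u) {v : Y} (hv : IsCornerCentral e v) :
    ∃! g : X → Y, IsBimodHom A g ∧ g u = v :=
  hX.universal ⟨Y⟩ v hv.smul_eq hv.op_smul_eq hv.comm

theorem exists_hom (hX : IsAeTensor A e X u) {v : Y} (hv : IsCornerCentral e v) :
    ∃ g : X → Y, IsBimodHom A g ∧ g u = v :=
  (hX.existsUnique_hom hv).exists

theorem hom_ext (hX : IsAeTensor A e X u) {f g : X → Y} (hf : IsBimodHom A f)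
    (hg : IsBimodHom A g) (h : f u = g u) : f = g :=
  (hX.existsUnique_hom (hX.isCornerCentral.map hf)).unique ⟨hf, rfl⟩ ⟨hg, h.symm⟩

theorem tmk_one_one (hX : IsAeTensor A e X u) : tmk A e u 1 1 = u := by
  rw [tmk, one_mul, mul_one, hX.op_smul_e, hX.smul_e]

theorem eq_top_of_smul_mem (hX : IsAeTensor A e X u) {S : AddSubgroup X} (hu : u ∈ S)
    (hl : ∀ (a : A) (x : X), x ∈ S → a • x ∈ S) (hr : ∀ (a : Aᵐᵒᵖ) (x : X), x ∈ S → a • x ∈ S) :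
    S = ⊤ := by
  let _ : SMul A S := ⟨fun a x => ⟨a • x, hl a x x.2⟩⟩
  let _ : SMul Aᵐᵒᵖ S := ⟨fun a x => ⟨a • x, hr a x x.2⟩⟩
  let _ : Module A S := Subtype.val_injective.module A S.subtype fun _ _ => rfl
  let _ : Module Aᵐᵒᵖ S := Subtype.val_injective.module Aᵐᵒᵖ S.subtype fun _ _ => rfl
  have : SMulCommClass A Aᵐᵒᵖ S := ⟨fun a b x => Subtype.ext (smul_comm a b (x : X))⟩
  have hval : IsBimodHom A (Subtype.val : S → X) :=
    ⟨fun _ _ => rfl, fun _ _ => rfl, fun _ _ => rfl⟩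
  obtain ⟨g, hg, hgu⟩ := hX.exists_hom (v := (⟨u, hu⟩ : S))
    (.of_map hval Subtype.val_injective hX.isCornerCentral)
  have hid : Subtype.val ∘ g = id := hX.hom_ext (hval.comp hg) .id (by simp [hgu])
  refine eq_top_iff.2 fun x _ => ?_
  have hx : (g x : X) = x := congrFun hid x
  exact hx ▸ (g x).2

theorem closure_tmk_eq_top (hX : IsAeTensor A e X u) :
    AddSubgroup.closure (Set.range fun p : A × A => tmk A e u p.1 p.2) = ⊤ := by
  set S := AddSubgroup.closure (Set.range fun p : A × A => tmk A e u p.1 p.2)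
  have stable : ∀ φ : X →+ X, (∀ a b, φ (tmk A e u a b) ∈ S) → ∀ x ∈ S, φ x ∈ S :=
    fun φ hφ => (AddSubgroup.closure_le (K := S.comap φ)).2 <| by
      rintro _ ⟨⟨a, b⟩, rfl⟩
      exact hφ a b
  refine hX.eq_top_of_smul_mem (AddSubgroup.subset_closure ⟨(1, 1), hX.tmk_one_one⟩)
    (fun a => stable (DistribSMul.toAddMonoidHom X a) fun b c => ?_)
    (fun a => stable (DistribSMul.toAddMonoidHom X a) fun b c => ?_)
  · exact AddSubgroup.subset_closure ⟨(a * b, c), (smul_tmk e u a b c).symm⟩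
  · exact AddSubgroup.subset_closure ⟨(b, c * a.unop), (op_smul_tmk e u a.unop b c).symm⟩

theorem addMonoidHom_ext (hX : IsAeTensor A e X u) {M : Type*} [AddCommGroup M] {f g : X →+ M}
    (h : ∀ a b, f (tmk A e u a b) = g (tmk A e u a b)) : f = g :=
  AddMonoidHom.eq_of_eqOn_dense hX.closure_tmk_eq_top (by rintro _ ⟨⟨a, b⟩, rfl⟩; exact h a b)

theorem exists_mulHom (hX : IsAeTensor A e X u) (he : IsIdempotentElem e) :
    ∃ μ : X → A, IsBimodHom A μ ∧ μ u = e :=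
  hX.exists_hom ((isCornerCentral_iff_mem_centerCorner he).2 (idem_mem_centerCorner he))

theorem tmk_mul_idem (hX : IsAeTensor A e X u) (he : IsIdempotentElem e) (a b : A) :
    tmk A e u a (b * e) = (a * e * b * e) • u := by
  rw [tmk, ← mul_assoc e b e, ← hX.balance, smul_smul]
  simp only [mul_assoc, he.mul_self_mul]

theorem tmk_mul_of_mem_centerCorner (hX : IsAeTensor A e X u) (he : IsIdempotentElem e)
    (hz : z ∈ centerCorner A e) (a b : A) : tmk A e u a (z * b) = tmk A e u (a * z) b := by
  have hzu : op z • u = z • u := by rw [hz.1]; exact (hX.balance z).symm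
  rw [tmk, tmk, ← mul_assoc e z b, idem_mul_of_mem_centerCorner he hz, op_mul z b,
    mul_smul (op b) (op z) u, hzu, ← smul_comm z (op b) u, smul_smul (a * e) z, op_mul e b,
    mul_smul (op b) (op e) u, hX.op_smul_e, mul_assoc a e z, idem_mul_of_mem_centerCorner he hz,
    mul_assoc a z e, mul_idem_of_mem_centerCorner he hz]

theorem smul_op_smul_eq (hX : IsAeTensor A e X u) (he : IsIdempotentElem e) {μ : X → A}
    (hμ : IsBimodHom A μ) (hμu : μ u = e) (x : X) : e • op e • x = (e * μ x * e) • u := by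
  let f : X →+ X := AddMonoidHom.mk' (fun x => e • op e • x) fun x y => by simp only [smul_add]
  let g : X →+ X := AddMonoidHom.mk' (fun x => (e * μ x * e) • u) fun x y => by
    simp only [hμ.1, mul_add, add_mul, add_smul]
  refine DFunLike.congr_fun (hX.addMonoidHom_ext (f := f) (g := g) fun a b => ?_) x
  change e • op e • tmk A e u a b = (e * μ (tmk A e u a b) * e) • u
  rw [op_smul_tmk, smul_tmk, hX.tmk_mul_idem he, hμ.map_tmk, hμu, tmk_idem e he]
  simp only [mul_assoc]

theorem exists_eq_smul (hX : IsAeTensor A e X u) (he : IsIdempotentElem e) {x : X}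
    (hx : IsCornerCentral e x) : ∃ z ∈ centerCorner A e, x = z • u := by
  obtain ⟨μ, hμ, hμu⟩ := hX.exists_mulHom he
  have hz : μ x ∈ centerCorner A e := (isCornerCentral_iff_mem_centerCorner he).1 (hx.map hμ)
  refine ⟨μ x, hz, ?_⟩
  calc x = e • op e • x := by rw [hx.op_smul_eq, hx.smul_eq]
    _ = (e * μ x * e) • u := hX.smul_op_smul_eq he hμ hμu x
    _ = μ x • u := by rw [← hz.1]

theorem bijective_iff_exists_inverse (hX : IsAeTensor A e X u) (he : IsIdempotentElem e)
    (hz : z ∈ centerCorner A e) {f : X → X} (hf : IsBimodHom A f) (hfu : f u = z • u) :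
    Bijective f ↔ ∃ w ∈ centerCorner A e, z * w = e ∧ w * z = e := by
  constructor
  · intro hbij
    obtain ⟨x, hx⟩ := hbij.2 u
    obtain ⟨w, hw, rfl⟩ :=
      hX.exists_eq_smul he (.of_map hf hbij.1 (hx ▸ hX.isCornerCentral))
    obtain ⟨μ, hμ, hμu⟩ := hX.exists_mulHom he
    have hwz : w * z = e := by
      have h := congrArg μ hx
      rwa [hf.2.1, hfu, smul_smul, hμ.2.1, hμu, smul_eq_mul, mul_assoc,
        mul_idem_of_mem_centerCorner he hz] at h
    exact ⟨w, hw, (mul_comm_of_mem_centerCorner hz hw).trans hwz, hwz⟩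
  · rintro ⟨w, hw, hzw, hwz⟩
    obtain ⟨g, hg, hgu⟩ := hX.exists_hom (hX.isCornerCentral.smul he hw)
    have hgf : g ∘ f = id := hX.hom_ext (hg.comp hf) .id <| by
      rw [comp_apply, hfu, hg.2.1, hgu, smul_smul, hzw, hX.smul_e, id]
    have hfg : f ∘ g = id := hX.hom_ext (hf.comp hg) .id <| by
      rw [comp_apply, hgu, hf.2.1, hfu, smul_smul, hwz, hX.smul_e, id]
    exact bijective_iff_has_inverse.2 ⟨g, congrFun hgf, congrFun hfg⟩

end IsAeTensor

section Tensor

variable {e : A} {X Y Z T : Type u} [AddCommGroup X] [Module A X] [Module Aᵐᵒᵖ X]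
  [AddCommGroup Y] [Module A Y] [Module Aᵐᵒᵖ Y] [AddCommGroup Z] [Module A Z] [Module Aᵐᵒᵖ Z]
  [AddCommGroup T] [Module A T] [Module Aᵐᵒᵖ T]

theorem IsBimodHom.isBalancedBiadd_smul [SMulCommClass A Aᵐᵒᵖ Y] {μ : X → A}
    (hμ : IsBimodHom A μ) : IsBalancedBiadd A (fun (x : X) (y : Y) => μ x • y) :=
  ⟨fun x x' y => by simp only [hμ.1, add_smul], fun x y y' => smul_add _ _ _,
    fun a x y => by simp only [hμ.2.2, op_smul_eq_mul, mul_smul],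
    fun a x y => by simp only [hμ.2.1, smul_eq_mul, mul_smul],
    fun a x y => smul_comm _ _ _⟩

theorem IsBalancedBiadd.comp {t : X → Y → Z} (ht : IsBalancedBiadd A t) {F : Z → T}
    (hF : IsBimodHom A F) : IsBalancedBiadd A (fun x y => F (t x y)) := by
  obtain ⟨hadd₁, hadd₂, hbal, hl, hr⟩ := ht
  exact ⟨fun x x' y => by simp only [hadd₁, hF.1], fun x y y' => by simp only [hadd₂, hF.1],
    fun a x y => by simp only [hbal], fun a x y => by simp only [hl, hF.2.1],
    fun a x y => by simp only [hr, hF.2.2]⟩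

theorem IsBalancedBiadd.isCornerCentral {t : X → Y → Z} (ht : IsBalancedBiadd A t) {v : X}
    {w : Y} (hv : IsCornerCentral e v) (hw : IsCornerCentral e w) :
    IsCornerCentral e (t v w) := by
  obtain ⟨-, -, hbal, hl, hr⟩ := ht
  exact ⟨by rw [← hl, hv.smul_eq], by rw [← hr, hw.op_smul_eq],
    fun a => by rw [← hl, hv.comm, hbal, hw.comm, hr]⟩

theorem IsTensorOverA.hom_ext [SMulCommClass A Aᵐᵒᵖ Z] [SMulCommClass A Aᵐᵒᵖ T]
    {t : X → Y → T} (hT : IsTensorOverA A t) {F G : T → Z} (hF : IsBimodHom A F)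
    (hG : IsBimodHom A G) (h : ∀ x y, F (t x y) = G (t x y)) : F = G :=
  (hT.universal ⟨Z⟩ _ (hT.balanced.comp hF)).unique ⟨hF, fun _ _ => rfl⟩
    ⟨hG, fun x y => (h x y).symm⟩

end Tensor

namespace IsAeTensor

variable {e : A} {X : Type u} [AddCommGroup X] [Module A X] [Module Aᵐᵒᵖ X]
  [SMulCommClass A Aᵐᵒᵖ X] {u : X}
  {T : Type u} [AddCommGroup T] [Module A T] [Module Aᵐᵒᵖ T] [SMulCommClass A Aᵐᵒᵖ T]
  {t : X → X → T}

theorem tensor_hom_ext (hX : IsAeTensor A e X u) (hT : IsTensorOverA A t) {Z : Type u}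
    [AddCommGroup Z] [Module A Z] [Module Aᵐᵒᵖ Z] [SMulCommClass A Aᵐᵒᵖ Z] {F G : T → Z}
    (hF : IsBimodHom A F) (hG : IsBimodHom A G)
    (h : ∀ a b c d,
      F (t (tmk A e u a b) (tmk A e u c d)) = G (t (tmk A e u a b) (tmk A e u c d))) :
    F = G := by
  obtain ⟨hF₁, hF₂, -⟩ := hT.balanced.comp hF
  obtain ⟨hG₁, hG₂, -⟩ := hT.balanced.comp hG
  have on_tmk_left : ∀ a b y, F (t (tmk A e u a b) y) = G (t (tmk A e u a b) y) := fun a b =>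
    DFunLike.congr_fun <| hX.addMonoidHom_ext
      (f := .mk' (fun y => F (t (tmk A e u a b) y)) (hF₂ _))
      (g := .mk' (fun y => G (t (tmk A e u a b) y)) (hG₂ _)) (h a b)
  refine hT.hom_ext hF hG fun x y => DFunLike.congr_fun (hX.addMonoidHom_ext
    (f := .mk' (fun x => F (t x y)) (hF₁ · · y)) (g := .mk' (fun x => G (t x y)) (hG₁ · · y))
    fun a b => on_tmk_left a b y) x

theorem exists_bijective_tensorMul (hX : IsAeTensor A e X u) (he : IsIdempotentElem e)
    (hT : IsTensorOverA A t) {μ : X → A} (hμ : IsBimodHom A μ) (hμu : μ u = e) :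
    ∃ m : T → X, IsBimodHom A m ∧ Bijective m ∧ ∀ x y, m (t x y) = μ x • y := by
  obtain ⟨-, -, hbal, hl, hr⟩ := hT.balanced
  obtain ⟨m, ⟨hm, hmt⟩, -⟩ := hT.universal ⟨X⟩ _ hμ.isBalancedBiadd_smul
  obtain ⟨n, hn, hnu⟩ :=
    hX.exists_hom (hT.balanced.isCornerCentral hX.isCornerCentral hX.isCornerCentral)
  have hnm : n ∘ m = id := hX.tensor_hom_ext hT (hn.comp hm) .id fun a b c d => by
    rw [comp_apply, hmt, hμ.map_tmk, hμu, tmk_idem e he, smul_tmk, hn.map_tmk, hnu,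
      tmk.eq_1 A e (t u u), ← hr, ← hl, id, tmk.eq_1 A e u c d, ← hbal, op_smul_tmk,
      ← mul_assoc b c e, hX.tmk_mul_idem he]
    simp only [mul_assoc]
  have hmn : m ∘ n = id := hX.hom_ext (hm.comp hn) .id <| by
    rw [comp_apply, hnu, hmt, hμu, hX.smul_e, id]
  exact ⟨m, hm, bijective_iff_has_inverse.2 ⟨n, congrFun hnm, congrFun hmn⟩, hmt⟩

end IsAeTensor

theorem omega_lam_isomorphism_iff_unit_general
    (A : Type u) [Ring A]
    (e : A) (he : IsIdempotentElem e)
    (X : Type u) [AddCommGroup X] [Module A X] [Module Aᵐᵒᵖ X] [SMulCommClass A Aᵐᵒᵖ X]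
    (u : X) (hX : IsAeTensor A e X u)
    (T : Type u) [AddCommGroup T] [Module A T] [Module Aᵐᵒᵖ T] [SMulCommClass A Aᵐᵒᵖ T]
    (t : X → X → T) (hT : IsTensorOverA A t)
    (lam : A) (hlam : lam ∈ centerCorner A e)
    (ω : T → X) (hω : IsBimodHom A ω)
    (hspec : ∀ b c b' c' : A, ω (t (tmk A e u b c) (tmk A e u b' c')) =
      tmk A e u (b * e * c * b') (lam * c')) :
    Function.Bijective ω ↔
      ∃ mu ∈ centerCorner A e, lam * mu = e ∧ mu * lam = e := by
  obtain ⟨μ, hμ, hμu⟩ := hX.exists_mulHom he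
  obtain ⟨m, hm, hm_bij, hmt⟩ := hX.exists_bijective_tensorMul he hT hμ hμu
  obtain ⟨l, hl, hlu⟩ := hX.exists_hom (hX.isCornerCentral.smul he hlam)
  have hω_eq : ω = l ∘ m := hX.tensor_hom_ext hT hω (hl.comp hm) fun a b c d => by
    rw [hspec, comp_apply, hmt, hμ.map_tmk, hμu, tmk_idem e he, smul_tmk,
      map_tmk_of_map_eq_smul he hlam hl hlu, hX.tmk_mul_of_mem_centerCorner he hlam]
  rw [hω_eq, Bijective.of_comp_iff l hm_bij]
  exact hX.bijective_iff_exists_inverse he hlam hl hlu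

/-- For `λ ∈ Z(eAe)`, the bimodule homomorphism
`ω_λ : Δ₀ ⊗_A Δ₀ → Δ₀` is an isomorphism if and only if `λ` is an invertible element
of `Z(eAe)` (whose identity element is `e`). -/
theorem omega_lam_isomorphism_iff_unit
    (k : Type u) [CommRing k] (A : Type u) [Ring A] [Algebra k A]
    (e : A) (he : IsIdempotentElem e)
    (X : Type u) [AddCommGroup X] [Module A X] [Module Aᵐᵒᵖ X] [SMulCommClass A Aᵐᵒᵖ X]
    (u : X) (hX : IsAeTensor A e X u)
    (T : Type u) [AddCommGroup T] [Module A T] [Module Aᵐᵒᵖ T] [SMulCommClass A Aᵐᵒᵖ T]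
    (t : X → X → T) (hT : IsTensorOverA A t)
    (lam : A) (hlam : lam ∈ centerCorner A e)
    (ω : T → X) (hω : IsBimodHom A ω)
    (hspec : ∀ b c b' c' : A, ω (t (tmk A e u b c) (tmk A e u b' c')) =
      tmk A e u (b * e * c * b') (lam * c')) :
    Function.Bijective ω ↔
      ∃ mu ∈ centerCorner A e, lam * mu = e ∧ mu * lam = e :=
  omega_lam_isomorphism_iff_unit_general A e he X u hX T t hT lam hlam ω hω hspec

end Paper
end
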